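/- arXiv:2308.02578 — 2 statements merged into one kernel-verified Lean document; each statement's English description precedes it below -/
import Mathlib

section
/- Let (Ω, μ) be a measure space and suppose A : L¹(μ) + L^∞(μ) → L¹(μ) + L^∞(μ) is a linear map with A(L¹) ⊆ L¹, A(L^∞) ⊆ L^∞, and ‖A(h)‖_∞ ≤ c‖h‖_∞ for some c > 0 and all h ∈ L^∞. Then A maps Fava's space R₀ into itself, where R₀ = { f ∈ L¹ + L^∞ : μ{|f| > λ} < ∞ for all λ > 0 }. -/
/-!
A function `f` lies in `R₀` iff for every `δ > 0` it splits as `g + h` with `g ∈ L¹` and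
`‖h‖_∞ ≤ δ`: cut `f` at height `δ`. The map `A` carries such a splitting of `f` to one of `A f`
with `δ` replaced by `c δ`, so `A f ∈ R₀`.
-/

open MeasureTheory

/-- A function lies in `L¹ + L^∞`. -/
def InL1PlusLinf {Ω : Type*} [MeasurableSpace Ω] (μ : Measure Ω) (f : Ω → ℝ) : Prop :=
  ∃ g h : Ω → ℝ, Integrable g μ ∧ MemLp h ⊤ μ ∧ f = g + h

section

open Set
open scoped ENNReal

/-- Fava's space `R₀`. -/
def InFavaR0 {Ω : Type*} [MeasurableSpace Ω] (μ : Measure Ω) (f : Ω → ℝ) : Prop :=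
  InL1PlusLinf μ f ∧ ∀ l : ℝ, 0 < l → μ {t | l < |f t|} < ⊤

variable {Ω : Type*} [MeasurableSpace Ω] {μ : Measure Ω} {f g h : Ω → ℝ}

namespace InL1PlusLinf

lemma of_integrable (hg : Integrable g μ) : InL1PlusLinf μ g :=
  ⟨g, 0, hg, .zero, (add_zero g).symm⟩

lemma of_memLp_top (hh : MemLp h ⊤ μ) : InL1PlusLinf μ h :=
  ⟨0, h, integrable_zero _ _ _, hh, (zero_add h).symm⟩

lemma aestronglyMeasurable (hf : InL1PlusLinf μ f) : AEStronglyMeasurable f μ := by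
  obtain ⟨g, h, hg, hh, rfl⟩ := hf
  exact hg.aestronglyMeasurable.add hh.aestronglyMeasurable

lemma integrableOn {s : Set Ω} (hf : InL1PlusLinf μ f) (hs : μ s ≠ ∞) :
    IntegrableOn f s μ := by
  obtain ⟨g, h, hg, hh, rfl⟩ := hf
  have : IsFiniteMeasure (μ.restrict s) := isFiniteMeasure_restrict.2 hs
  exact hg.integrableOn.add ((hh.restrict s).integrable le_top)

/-- The part of `f` above height `δ` lives on a set of finite measure, on which `f` is
integrable. -/
theorem exists_integrable_add_eLpNorm_top_le (hf : InL1PlusLinf μ f) {δ : ℝ}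
    (hfδ : μ {t | δ < |f t|} < ⊤) :
    ∃ g h : Ω → ℝ, Integrable g μ ∧ MemLp h ⊤ μ ∧ eLpNorm h ⊤ μ ≤ ENNReal.ofReal δ ∧
      f = g + h := by
  set s := {t | δ < |f t|}
  have hs : NullMeasurableSet s μ :=
    aestronglyMeasurable_const.nullMeasurableSet_lt
      (continuous_abs.comp_aestronglyMeasurable hf.aestronglyMeasurable)
  have hbound : eLpNorm (sᶜ.indicator f) ⊤ μ ≤ ENNReal.ofReal δ := by
    rw [eLpNorm_exponent_top]
    refine eLpNormEssSup_le_of_ae_enorm_bound (.of_forall fun t => ?_)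
    by_cases ht : t ∈ s
    · simp [ht]
    · rw [indicator_of_mem (mem_compl ht), ← ofReal_norm]
      exact ENNReal.ofReal_le_ofReal (not_lt.1 ht)
  refine ⟨s.indicator f, sᶜ.indicator f, (hf.integrableOn hfδ.ne).integrable_indicator₀ hs,
    ⟨hf.aestronglyMeasurable.indicator₀ hs.compl, hbound.trans_lt ENNReal.ofReal_lt_top⟩,
    hbound, (indicator_self_add_compl s f).symm⟩

end InL1PlusLinf

theorem measure_lt_abs_add_lt_top (hg : Integrable g μ) {ε l : ℝ} (hε : 0 ≤ ε)
    (hh : eLpNorm h ⊤ μ ≤ ENNReal.ofReal ε) (hεl : ε < l) :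
    μ {t | l < |g t + h t|} < ⊤ := by
  have hh_le : ∀ᵐ t ∂μ, |h t| ≤ ε := by
    filter_upwards [ae_le_eLpNormEssSup (f := h)] with t ht
    rw [← eLpNorm_exponent_top] at ht
    rw [← Real.norm_eq_abs, ← ENNReal.ofReal_le_ofReal_iff hε, ofReal_norm]
    exact ht.trans hh
  calc μ {t | l < |g t + h t|} ≤ μ {t | l - ε ≤ ‖g t‖} := by
        refine measure_mono_ae ?_
        filter_upwards [hh_le] with t ht (hlt : l < |g t + h t|)
        show l - ε ≤ |g t|
        linarith [abs_add_le (g t) (h t)]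
    _ < ⊤ := hg.measure_norm_ge_lt_top (sub_pos.2 hεl)

theorem inFavaR0_iff_forall_decomposition :
    InFavaR0 μ f ↔ ∀ δ : ℝ, 0 < δ → ∃ g h : Ω → ℝ, Integrable g μ ∧ MemLp h ⊤ μ ∧
      eLpNorm h ⊤ μ ≤ ENNReal.ofReal δ ∧ f = g + h := by
  refine ⟨fun hf δ hδ => hf.1.exists_integrable_add_eLpNorm_top_le (hf.2 δ hδ), fun H => ?_⟩
  refine ⟨?_, fun l hl => ?_⟩
  · obtain ⟨g, h, hg, hh, -, rfl⟩ := H 1 one_pos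
    exact ⟨g, h, hg, hh, rfl⟩
  · obtain ⟨g, h, hg, -, hhl, rfl⟩ := H (l / 2) (half_pos hl)
    exact measure_lt_abs_add_lt_top hg (half_pos hl).le hhl (half_lt_self hl)

end

theorem fava_space_invariant_general
    {Ω : Type*} [MeasurableSpace Ω] (μ : Measure Ω)
    (A : (Ω → ℝ) → (Ω → ℝ))
    (hadd : ∀ f g : Ω → ℝ, InL1PlusLinf μ f → InL1PlusLinf μ g →
      A (f + g) = A f + A g)
    (hL1 : ∀ g : Ω → ℝ, Integrable g μ → Integrable (A g) μ)
    (c : ℝ) (hc : 0 < c)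
    (hLinf : ∀ h : Ω → ℝ, MemLp h ⊤ μ → MemLp (A h) ⊤ μ ∧
      eLpNorm (A h) ⊤ μ ≤ ENNReal.ofReal c * eLpNorm h ⊤ μ)
    (f : Ω → ℝ) (hf : InL1PlusLinf μ f)
    (hfR₀ : ∀ l : ℝ, 0 < l → μ {t | l < |f t|} < ⊤) :
    InL1PlusLinf μ (A f) ∧ ∀ l : ℝ, 0 < l → μ {t | l < |A f t|} < ⊤ := by
  refine inFavaR0_iff_forall_decomposition.2 fun δ hδ => ?_
  obtain ⟨g, h, hg, hh, hhδ, rfl⟩ :=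
    inFavaR0_iff_forall_decomposition.1 ⟨hf, hfR₀⟩ (δ / c) (div_pos hδ hc)
  obtain ⟨hAh, hAh_le⟩ := hLinf h hh
  refine ⟨A g, A h, hL1 g hg, hAh, ?_,
    hadd g h (.of_integrable hg) (.of_memLp_top hh)⟩
  calc eLpNorm (A h) ⊤ μ ≤ ENNReal.ofReal c * eLpNorm h ⊤ μ := hAh_le
    _ ≤ ENNReal.ofReal c * ENNReal.ofReal (δ / c) := by gcongr
    _ = ENNReal.ofReal δ := by rw [← ENNReal.ofReal_mul hc.le, mul_div_cancel₀ _ hc.ne']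

/-- A linear map on `L¹ + L^∞` preserving `L¹` and `L^∞`, and bounded in the uniform
norm, maps Fava's space `R₀` into itself. -/
theorem fava_space_invariant
    {Ω : Type*} [MeasurableSpace Ω] (μ : Measure Ω)
    (A : (Ω → ℝ) → (Ω → ℝ))
    (hadd : ∀ f g : Ω → ℝ, InL1PlusLinf μ f → InL1PlusLinf μ g →
      A (f + g) = A f + A g)
    (hsmul : ∀ (c : ℝ) (f : Ω → ℝ), InL1PlusLinf μ f → A (c • f) = c • A f)
    (hL1 : ∀ g : Ω → ℝ, Integrable g μ → Integrable (A g) μ)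
    (c : ℝ) (hc : 0 < c)
    (hLinf : ∀ h : Ω → ℝ, MemLp h ⊤ μ → MemLp (A h) ⊤ μ ∧
      eLpNorm (A h) ⊤ μ ≤ ENNReal.ofReal c * eLpNorm h ⊤ μ)
    (f : Ω → ℝ) (hf : InL1PlusLinf μ f)
    (hfR₀ : ∀ l : ℝ, 0 < l → μ {t | l < |f t|} < ⊤) :
    InL1PlusLinf μ (A f) ∧ ∀ l : ℝ, 0 < l → μ {t | l < |A f t|} < ⊤ :=
  fava_space_invariant_general μ A hadd hL1 c hc hLinf f hf hfR₀
end

section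
/- For f ∈ L¹(μ) + L^∞(μ) on a measure space (Ω, μ) and s > 0, one has ∫₀ˢ μ_t(f) dt = inf{ ‖g‖₁ + s‖h‖_∞ : f = g + h, g ∈ L¹(μ), h ∈ L^∞(μ) }, where μ_t(f) is the non-increasing rearrangement of f. -/
open MeasureTheory

/-- The non-increasing rearrangement of `f`. -/
noncomputable def rearrangement {Ω : Type*} [MeasurableSpace Ω] (μ : Measure Ω)
    (f : Ω → ℝ) (t : ℝ) : ℝ :=
  sInf {l : ℝ | 0 < l ∧ μ {x | l < |f x|} ≤ ENNReal.ofReal t}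

/-!
Write `d_f(l) = μ {|f| > l}`. Since `μ_t(f) > l` iff `d_f(l) > t`, the layer-cake formula gives
`∫₀ˢ μ_t(f) dt = ∫₀^∞ min(s, d_f(l)) dl`. If `f = g + h` with `|h| ≤ c` a.e., then
`d_f(l + c) ≤ d_g(l)`, so this integral is at most `s c + ∫_c^∞ d_f ≤ s c + ‖g‖₁`.
Equality holds for the truncation `h = max(-c, min(c, f))` at height `c = μ_s(f)`: then
`min(s, d_f) = s` below `c` and `= d_f` above it, while `‖f - h‖₁ = ∫_c^∞ d_f`.
-/

open Set
open scoped ENNReal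

lemma abs_sub_max_neg_min {c : ℝ} (hc : 0 ≤ c) (y : ℝ) :
    |y - max (-c) (min c y)| = max (|y| - c) 0 := by
  rcases le_total y (-c) with h | h
  · rw [min_eq_right (by linarith), max_eq_left h, abs_of_nonpos (by linarith),
      abs_of_nonpos (by linarith), max_eq_left (by linarith)]
    ring
  rcases le_total y c with h' | h'
  · rw [min_eq_right h', max_eq_right h, sub_self, abs_zero,
      max_eq_right (by linarith [abs_le.2 ⟨h, h'⟩])]
  · rw [min_eq_left h', max_eq_right (by linarith), abs_of_nonneg (by linarith),
      abs_of_nonneg (by linarith), max_eq_left (by linarith)]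

lemma ENNReal.toReal_add_ofReal_mul {a b : ℝ≥0∞} (ha : a ≠ ⊤) (hb : b ≠ ⊤) {s : ℝ}
    (hs : 0 ≤ s) :
    (a + ENNReal.ofReal s * b).toReal = a.toReal + s * b.toReal := by
  rw [ENNReal.toReal_add ha (ENNReal.mul_ne_top ENNReal.ofReal_ne_top hb), ENNReal.toReal_mul,
    ENNReal.toReal_ofReal hs]

lemma volume_ofReal_lt_inter_Ioc (a : ℝ≥0∞) (s : ℝ) :
    volume ({t : ℝ | ENNReal.ofReal t < a} ∩ Ioc 0 s) = min (ENNReal.ofReal s) a := by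
  rcases eq_or_ne a ⊤ with rfl | ha
  · simp
  have hset : {t : ℝ | ENNReal.ofReal t < a} ∩ Ioc 0 s = Ioc 0 s ∩ Iio a.toReal := by
    ext t
    simp only [mem_inter_iff, mem_ofPred_eq, mem_Ioc, mem_Iio]
    constructor
    · rintro ⟨hta, ht0, hts⟩
      exact ⟨⟨ht0, hts⟩, (ENNReal.ofReal_lt_iff_lt_toReal ht0.le ha).1 hta⟩
    · rintro ⟨⟨ht0, hts⟩, hta⟩
      exact ⟨(ENNReal.ofReal_lt_iff_lt_toReal ht0.le ha).2 hta, ht0, hts⟩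
  rw [hset, measure_congr ((ae_eq_refl _).inter Iio_ae_eq_Iic), Ioc_inter_Iic, Real.volume_Ioc,
    sub_zero, ENNReal.ofReal_min, ENNReal.ofReal_toReal ha]

lemma setLIntegral_Ioi_eq_setLIntegral_Ioi_zero_add (F : ℝ → ℝ≥0∞) (c : ℝ) :
    ∫⁻ l in Ioi c, F l = ∫⁻ l in Ioi 0, F (l + c) := by
  rw [← (measurePreserving_add_right volume c).setLIntegral_comp_preimage_emb
    (measurableEmbedding_addRight c), preimage_add_const_Ioi, sub_self]

lemma setLIntegral_Ioi_zero_min_le (F : ℝ → ℝ≥0∞) (a : ℝ≥0∞) {c : ℝ} (hc : 0 ≤ c) :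
    ∫⁻ l in Ioi 0, min a (F l) ≤ ENNReal.ofReal c * a + ∫⁻ l in Ioi c, F l := by
  rw [← Ioc_union_Ioi_eq_Ioi hc, lintegral_union measurableSet_Ioi (Ioc_disjoint_Ioi le_rfl)]
  gcongr
  · calc ∫⁻ l in Ioc 0 c, min a (F l) ≤ ∫⁻ _ in Ioc 0 c, a :=
          lintegral_mono fun l => min_le_left _ _
      _ = ENNReal.ofReal c * a := by rw [setLIntegral_const, Real.volume_Ioc, sub_zero, mul_comm]
  · exact min_le_right _ _

lemma setLIntegral_Ioi_zero_min_eq (F : ℝ → ℝ≥0∞) (a : ℝ≥0∞) {c : ℝ} (hc : 0 ≤ c)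
    (hbelow : ∀ l ∈ Ioo 0 c, a ≤ F l) (habove : ∀ l ∈ Ioi c, F l ≤ a) :
    ∫⁻ l in Ioi 0, min a (F l) = ENNReal.ofReal c * a + ∫⁻ l in Ioi c, F l := by
  rw [← Ioc_union_Ioi_eq_Ioi hc, lintegral_union measurableSet_Ioi (Ioc_disjoint_Ioi le_rfl),
    ← setLIntegral_congr Ioo_ae_eq_Ioc,
    setLIntegral_congr_fun measurableSet_Ioo fun l hl => min_eq_left (hbelow l hl),
    setLIntegral_congr_fun measurableSet_Ioi fun l hl => min_eq_right (habove l hl),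
    setLIntegral_const, Real.volume_Ioo, sub_zero, mul_comm]

section Distribution

variable {Ω : Type*} [MeasurableSpace Ω] {μ : Measure Ω} {f g h : Ω → ℝ}

noncomputable def distribution (μ : Measure Ω) (f : Ω → ℝ) (l : ℝ) : ℝ≥0∞ :=
  μ {x | l < |f x|}

lemma distribution_antitone : Antitone (distribution μ f) :=
  fun _ _ hab => measure_mono fun _ hx => lt_of_le_of_lt hab hx

lemma distribution_le_of_forall_lt {l : ℝ} {c : ℝ≥0∞}
    (h : ∀ l', l < l' → distribution μ f l' ≤ c) : distribution μ f l ≤ c := by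
  obtain ⟨u, hu_anti, hu_gt, hu_lim⟩ := exists_seq_strictAnti_tendsto l
  have hunion : {x | l < |f x|} = ⋃ n, {x | u n < |f x|} := by
    ext x
    simp only [mem_ofPred_eq, mem_iUnion]
    refine ⟨fun hx => (hu_lim.eventually (gt_mem_nhds hx)).exists, ?_⟩
    rintro ⟨n, hn⟩
    exact (hu_gt n).trans hn
  have hmono : Monotone fun n => {x | u n < |f x|} :=
    fun m n hmn x hx => lt_of_le_of_lt (hu_anti.antitone hmn) hx
  rw [distribution, hunion, hmono.measure_iUnion]
  exact iSup_le fun n => h _ (hu_gt n)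

lemma eLpNorm_one_eq_lintegral_distribution (hg : AEMeasurable g μ) :
    eLpNorm g 1 μ = ∫⁻ l in Ioi 0, distribution μ g l := by
  simp_rw [eLpNorm_one_eq_lintegral_enorm, Real.enorm_eq_ofReal_abs]
  exact lintegral_eq_lintegral_meas_lt μ (ae_of_all _ fun x => abs_nonneg _) hg.abs

lemma ofReal_mul_distribution_le_eLpNorm_one (hg : AEMeasurable g μ) (l : ℝ) :
    ENNReal.ofReal l * distribution μ g l ≤ eLpNorm g 1 μ := by
  rw [eLpNorm_one_eq_lintegral_enorm]
  refine le_trans ?_ (mul_meas_ge_le_lintegral₀ hg.enorm (ENNReal.ofReal l))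
  gcongr
  refine measure_mono fun x hx => ?_
  rw [mem_ofPred_eq, Real.enorm_eq_ofReal_abs]
  exact ENNReal.ofReal_le_ofReal (le_of_lt hx)

lemma ae_abs_le_toReal_eLpNorm_top (hh : eLpNorm h ⊤ μ ≠ ⊤) :
    ∀ᵐ x ∂μ, |h x| ≤ (eLpNorm h ⊤ μ).toReal := by
  filter_upwards [ae_le_eLpNormEssSup (f := h) (μ := μ)] with x hx
  rw [← eLpNorm_exponent_top] at hx
  simpa [Real.enorm_eq_ofReal_abs] using ENNReal.toReal_mono hh hx

lemma distribution_add_le {c : ℝ} (hh : ∀ᵐ x ∂μ, |h x| ≤ c) (l : ℝ) :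
    distribution μ (g + h) (l + c) ≤ distribution μ g l := by
  refine measure_mono_ae ?_
  filter_upwards [hh] with x hx hlx
  have : l + c < |g x| + |h x| := lt_of_lt_of_le hlx (abs_add_le _ _)
  show l < |g x|
  linarith

lemma exists_distribution_le_of_decomposition
    (hf : ∃ g h : Ω → ℝ, Integrable g μ ∧ MemLp h ⊤ μ ∧ f = g + h) {t : ℝ} (ht : 0 < t) :
    ∃ m, 0 < m ∧ distribution μ f m ≤ ENNReal.ofReal t := by
  obtain ⟨g, h, hg, hh, rfl⟩ := hf
  obtain ⟨n, hn⟩ := ENNReal.exists_nat_gt (memLp_one_iff_integrable.2 hg).eLpNorm_ne_top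
  set c := (eLpNorm h ⊤ μ).toReal
  set l := ((n : ℝ) + 1) / t
  refine ⟨l + c, by positivity, ?_⟩
  by_contra! hlt
  refine hn.not_ge ?_
  calc (n : ℝ≥0∞) ≤ ENNReal.ofReal l * ENNReal.ofReal t := by
        rw [← ENNReal.ofReal_mul (by positivity), div_mul_cancel₀ _ ht.ne',
          ← ENNReal.ofReal_natCast]
        exact ENNReal.ofReal_le_ofReal (by linarith)
    _ ≤ ENNReal.ofReal l * distribution μ g l := by
        gcongr
        exact hlt.le.trans (distribution_add_le (ae_abs_le_toReal_eLpNorm_top hh.eLpNorm_ne_top) l)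
    _ ≤ eLpNorm g 1 μ := ofReal_mul_distribution_le_eLpNorm_one hg.aemeasurable l

end Distribution

section Rearrangement

variable {Ω : Type*} [MeasurableSpace Ω] {μ : Measure Ω} {f : Ω → ℝ} {t l : ℝ}

lemma rearrangement_nonneg (t : ℝ) : 0 ≤ rearrangement μ f t :=
  Real.sInf_nonneg fun _ hl => hl.1.le

lemma rearrangement_le_of_distribution_le (hl : 0 < l)
    (hD : distribution μ f l ≤ ENNReal.ofReal t) : rearrangement μ f t ≤ l :=
  csInf_le ⟨0, fun _ hm => hm.1.le⟩ ⟨hl, hD⟩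

lemma distribution_rearrangement_le
    (hne : ∃ m, 0 < m ∧ distribution μ f m ≤ ENNReal.ofReal t) :
    distribution μ f (rearrangement μ f t) ≤ ENNReal.ofReal t := by
  refine distribution_le_of_forall_lt fun l' hl' => ?_
  obtain ⟨m, hm, hml'⟩ := exists_lt_of_csInf_lt hne hl'
  exact (distribution_antitone hml'.le).trans hm.2

lemma rearrangement_le_iff (hne : ∃ m, 0 < m ∧ distribution μ f m ≤ ENNReal.ofReal t)
    (hl : 0 < l) : rearrangement μ f t ≤ l ↔ distribution μ f l ≤ ENNReal.ofReal t :=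
  ⟨fun h => (distribution_antitone h).trans (distribution_rearrangement_le hne),
    rearrangement_le_of_distribution_le hl⟩

lemma lt_rearrangement_iff (hne : ∃ m, 0 < m ∧ distribution μ f m ≤ ENNReal.ofReal t)
    (hl : 0 < l) : l < rearrangement μ f t ↔ ENNReal.ofReal t < distribution μ f l := by
  simpa only [not_le] using (rearrangement_le_iff hne hl).not

lemma rearrangement_antitoneOn
    (hne : ∀ t, 0 < t → ∃ m, 0 < m ∧ distribution μ f m ≤ ENNReal.ofReal t) :
    AntitoneOn (rearrangement μ f) (Ioi 0) := fun t ht _ _ htt' =>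
  csInf_le_csInf ⟨0, fun _ hm => hm.1.le⟩ (hne t ht) fun _ hl =>
    ⟨hl.1, hl.2.trans (ENNReal.ofReal_le_ofReal htt')⟩

lemma aemeasurable_rearrangement_restrict_Ioc
    (hne : ∀ t, 0 < t → ∃ m, 0 < m ∧ distribution μ f m ≤ ENNReal.ofReal t) (s : ℝ) :
    AEMeasurable (rearrangement μ f) (volume.restrict (Ioc 0 s)) :=
  aemeasurable_restrict_of_antitoneOn measurableSet_Ioc
    ((rearrangement_antitoneOn hne).mono Ioc_subset_Ioi_self)

lemma lintegral_rearrangement_eq_lintegral_min_distribution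
    (hne : ∀ t, 0 < t → ∃ m, 0 < m ∧ distribution μ f m ≤ ENNReal.ofReal t) (s : ℝ) :
    ∫⁻ t in Ioc 0 s, ENNReal.ofReal (rearrangement μ f t) =
      ∫⁻ l in Ioi 0, min (ENNReal.ofReal s) (distribution μ f l) := by
  rw [lintegral_eq_lintegral_meas_lt _ (ae_of_all _ rearrangement_nonneg)
    (aemeasurable_rearrangement_restrict_Ioc hne s)]
  refine setLIntegral_congr_fun measurableSet_Ioi fun l hl => ?_
  have hlevel : {t | l < rearrangement μ f t} ∩ Ioc 0 s =
      {t | ENNReal.ofReal t < distribution μ f l} ∩ Ioc 0 s := by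
    ext t
    simp only [mem_inter_iff, mem_ofPred_eq, and_congr_left_iff]
    exact fun ht => lt_rearrangement_iff (hne t ht.1) hl
  rw [Measure.restrict_apply' measurableSet_Ioc, hlevel, volume_ofReal_lt_inter_Ioc]

end Rearrangement

section Decomposition

variable {Ω : Type*} [MeasurableSpace Ω] {μ : Measure Ω} {f g h : Ω → ℝ} {s : ℝ}

lemma lintegral_min_distribution_le (hfgh : f = g + h) (hg : AEMeasurable g μ)
    (hh : eLpNorm h ⊤ μ ≠ ⊤) (a : ℝ≥0∞) :
    ∫⁻ l in Ioi 0, min a (distribution μ f l) ≤ eLpNorm g 1 μ + a * eLpNorm h ⊤ μ := by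
  set c := (eLpNorm h ⊤ μ).toReal
  calc ∫⁻ l in Ioi 0, min a (distribution μ f l)
      ≤ ENNReal.ofReal c * a + ∫⁻ l in Ioi 0, distribution μ f (l + c) := by
        rw [← setLIntegral_Ioi_eq_setLIntegral_Ioi_zero_add]
        exact setLIntegral_Ioi_zero_min_le _ a ENNReal.toReal_nonneg
    _ ≤ ENNReal.ofReal c * a + ∫⁻ l in Ioi 0, distribution μ g l := by
        subst hfgh
        gcongr with l
        exact distribution_add_le (ae_abs_le_toReal_eLpNorm_top hh) l
    _ = eLpNorm g 1 μ + a * eLpNorm h ⊤ μ := by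
        rw [eLpNorm_one_eq_lintegral_distribution hg, ENNReal.ofReal_toReal hh, add_comm, mul_comm]

lemma exists_decomposition_le_lintegral_min_distribution (hf : AEMeasurable f μ)
    (hne : ∃ m, 0 < m ∧ distribution μ f m ≤ ENNReal.ofReal s) :
    ∃ g h, f = g + h ∧ AEStronglyMeasurable g μ ∧ MemLp h ⊤ μ ∧
      eLpNorm g 1 μ + ENNReal.ofReal s * eLpNorm h ⊤ μ ≤
        ∫⁻ l in Ioi 0, min (ENNReal.ofReal s) (distribution μ f l) := by
  set c := rearrangement μ f s
  have hc : 0 ≤ c := rearrangement_nonneg s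
  set h : Ω → ℝ := fun x => max (-c) (min c (f x))
  have hh_meas : AEMeasurable h μ := aemeasurable_const.max (aemeasurable_const.min hf)
  have hh_bound : ∀ᵐ x ∂μ, ‖h x‖ ≤ c := ae_of_all _ fun x =>
    abs_le.2 ⟨le_max_left _ _, max_le (by linarith) (min_le_left _ _)⟩
  have hh_norm : eLpNorm h ⊤ μ ≤ ENNReal.ofReal c := by
    rw [eLpNorm_exponent_top]
    exact eLpNormEssSup_le_of_ae_bound hh_bound
  have hg_distribution :
      ∀ l, 0 < l → distribution μ (f - h) l = distribution μ f (l + c) := by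
    intro l hl
    refine congrArg μ (Set.ext fun x => ?_)
    simp only [mem_ofPred_eq, Pi.sub_apply, h, abs_sub_max_neg_min hc, lt_max_iff, hl.not_gt,
      or_false]
    constructor <;> intro <;> linarith
  have hg_norm : eLpNorm (f - h) 1 μ = ∫⁻ l in Ioi c, distribution μ f l := by
    rw [eLpNorm_one_eq_lintegral_distribution (hf.sub hh_meas),
      setLIntegral_Ioi_eq_setLIntegral_Ioi_zero_add (distribution μ f) c]
    exact setLIntegral_congr_fun measurableSet_Ioi hg_distribution
  have hsplit := setLIntegral_Ioi_zero_min_eq (distribution μ f) (ENNReal.ofReal s) hc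
    (fun l hl => ((lt_rearrangement_iff hne hl.1).1 hl.2).le)
    (fun l hl => (rearrangement_le_iff hne (hc.trans_lt hl)).1 hl.le)
  refine ⟨f - h, h, (sub_add_cancel f h).symm, (hf.sub hh_meas).aestronglyMeasurable,
    memLp_top_of_bound hh_meas.aestronglyMeasurable c hh_bound, ?_⟩
  rw [hsplit, hg_norm, add_comm (ENNReal.ofReal c * _), mul_comm (ENNReal.ofReal c)]
  gcongr

lemma isLeast_decomposition_cost
    (hf : ∃ g h : Ω → ℝ, Integrable g μ ∧ MemLp h ⊤ μ ∧ f = g + h) (hs : 0 < s) :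
    IsLeast {r : ℝ | ∃ g h : Ω → ℝ, Integrable g μ ∧ MemLp h ⊤ μ ∧ f = g + h ∧
        r = (eLpNorm g 1 μ).toReal + s * (eLpNorm h ⊤ μ).toReal}
      (∫⁻ l in Ioi 0, min (ENNReal.ofReal s) (distribution μ f l)).toReal := by
  have hcost_ne_top : ∀ g h : Ω → ℝ, Integrable g μ → MemLp h ⊤ μ →
      eLpNorm g 1 μ + ENNReal.ofReal s * eLpNorm h ⊤ μ ≠ ⊤ := fun g h hg hh =>
    ENNReal.add_ne_top.2 ⟨(memLp_one_iff_integrable.2 hg).eLpNorm_ne_top,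
      ENNReal.mul_ne_top ENNReal.ofReal_ne_top hh.eLpNorm_ne_top⟩
  have hle_cost : ∀ g h : Ω → ℝ, AEMeasurable g μ → MemLp h ⊤ μ → f = g + h →
      ∫⁻ l in Ioi 0, min (ENNReal.ofReal s) (distribution μ f l) ≤
        eLpNorm g 1 μ + ENNReal.ofReal s * eLpNorm h ⊤ μ := fun g h hg hh hfgh =>
    lintegral_min_distribution_le hfgh hg hh.eLpNorm_ne_top _
  obtain ⟨g₀, h₀, hg₀, hh₀, hfgh₀⟩ := hf
  have hf_meas : AEMeasurable f μ :=
    hfgh₀ ▸ hg₀.aemeasurable.add hh₀.aestronglyMeasurable.aemeasurable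
  obtain ⟨g, h, hfgh, hg_meas, hh, hcost_le⟩ :=
    exists_decomposition_le_lintegral_min_distribution hf_meas
      (exists_distribution_le_of_decomposition ⟨g₀, h₀, hg₀, hh₀, hfgh₀⟩ hs)
  have hA_ne_top := ne_top_of_le_ne_top (hcost_ne_top g₀ h₀ hg₀ hh₀)
    (hle_cost g₀ h₀ hg₀.aemeasurable hh₀ hfgh₀)
  have hg_ne_top : eLpNorm g 1 μ ≠ ⊤ :=
    ne_top_of_le_ne_top hA_ne_top (le_self_add.trans hcost_le)
  have hg : Integrable g μ := memLp_one_iff_integrable.1 ⟨hg_meas, hg_ne_top.lt_top⟩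
  refine ⟨⟨g, h, hg, hh, hfgh, ?_⟩, ?_⟩
  · rw [← ENNReal.toReal_add_ofReal_mul hg_ne_top hh.eLpNorm_ne_top hs.le,
      le_antisymm hcost_le (hle_cost g h hg.aemeasurable hh hfgh)]
  · rintro r ⟨g', h', hg', hh', hfgh', rfl⟩
    rw [← ENNReal.toReal_add_ofReal_mul (memLp_one_iff_integrable.2 hg').eLpNorm_ne_top
      hh'.eLpNorm_ne_top hs.le]
    exact ENNReal.toReal_mono (hcost_ne_top g' h' hg' hh')
      (hle_cost g' h' hg'.aemeasurable hh' hfgh')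

end Decomposition

theorem rearrangement_integral_eq_K_functional_general
    {Ω : Type*} [MeasurableSpace Ω] (μ : Measure Ω)
    (f : Ω → ℝ)
    (hf : ∃ g h : Ω → ℝ, Integrable g μ ∧ MemLp h ⊤ μ ∧ f = g + h)
    (s : ℝ) (hs : 0 < s) :
    ∫ t in Set.Ioc (0 : ℝ) s, rearrangement μ f t =
      sInf {r : ℝ | ∃ g h : Ω → ℝ, Integrable g μ ∧ MemLp h ⊤ μ ∧ f = g + h ∧
        r = (eLpNorm g 1 μ).toReal + s * (eLpNorm h ⊤ μ).toReal} := by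
  have hne : ∀ t, 0 < t → ∃ m, 0 < m ∧ distribution μ f m ≤ ENNReal.ofReal t :=
    fun _ ht => exists_distribution_le_of_decomposition hf ht
  rw [integral_eq_lintegral_of_nonneg_ae (ae_of_all _ rearrangement_nonneg)
      (aemeasurable_rearrangement_restrict_Ioc hne s).aestronglyMeasurable,
    lintegral_rearrangement_eq_lintegral_min_distribution hne,
    (isLeast_decomposition_cost hf hs).csInf_eq]

/-- K-functional characterization: for `f ∈ L¹ + L^∞` and `s > 0`,
`∫₀ˢ μ_t(f) dt = inf { ‖g‖₁ + s‖h‖_∞ : f = g + h, g ∈ L¹, h ∈ L^∞ }`. -/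
theorem rearrangement_integral_eq_K_functional
    {Ω : Type*} [MeasurableSpace Ω] (μ : Measure Ω)
    (f : Ω → ℝ) (hmeas : Measurable f)
    (hf : ∃ g h : Ω → ℝ, Integrable g μ ∧ MemLp h ⊤ μ ∧ f = g + h)
    (s : ℝ) (hs : 0 < s) :
    ∫ t in Set.Ioc (0 : ℝ) s, rearrangement μ f t =
      sInf {r : ℝ | ∃ g h : Ω → ℝ, Integrable g μ ∧ MemLp h ⊤ μ ∧ f = g + h ∧
        r = (eLpNorm g 1 μ).toReal + s * (eLpNorm h ⊤ μ).toReal} :=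
  rearrangement_integral_eq_K_functional_general μ f hf s hs
end
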